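/- Let p > 1 be a real number, let d be a positive natural number, and let (a_n)_{n≥1} be a sequence of positive semi-definite d×d complex matrices such that ∑_{n=1}^∞ Tr(a_n^p) < ∞. Then ∑_{n=1}^∞ Tr(((1/n) ∑_{k=1}^n a_k)^p) ≤ (p/(p−1))^p ∑_{n=1}^∞ Tr(a_n^p). -/

import Mathlib

open scoped ComplexOrder
/-- `A ^ p` for a matrix `A` and a real exponent `p`, via the continuous functional calculus
(for a positive semi-definite matrix this applies `t ↦ t ^ p` to the eigenvalues). -/
noncomputable def Matrix.cfcRpow {d : ℕ} (A : Matrix (Fin d) (Fin d) ℂ) (p : ℝ) :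
    Matrix (Fin d) (Fin d) ℂ :=
  cfc (fun t : ℝ => t ^ p) A

namespace HardyAux

open Matrix Finset

variable {d : ℕ}

lemma trace_hcfc {A : Matrix (Fin d) (Fin d) ℂ} (hA : A.IsHermitian) (f : ℝ → ℝ) :
    (hA.cfc f).trace = ∑ i, (f (hA.eigenvalues i) : ℂ) := by
  rw [Matrix.IsHermitian.cfc, Unitary.conjStarAlgAut_apply, Matrix.trace_mul_cycle,
    (Matrix.mem_unitaryGroup_iff').mp (hA.eigenvectorUnitary).2, one_mul, trace_diagonal]
  simp

lemma trace_hcfc_re {A : Matrix (Fin d) (Fin d) ℂ} (hA : A.IsHermitian) (f : ℝ → ℝ) :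
    ((hA.cfc f).trace).re = ∑ i, f (hA.eigenvalues i) := by
  rw [trace_hcfc hA f, Complex.re_sum]
  simp

lemma hcfc_mul_hcfc {A : Matrix (Fin d) (Fin d) ℂ} (hA : A.IsHermitian) (f g : ℝ → ℝ) :
    hA.cfc f * hA.cfc g = hA.cfc (fun x => f x * g x) := by
  have h1 : (star (hA.eigenvectorUnitary : Matrix (Fin d) (Fin d) ℂ)) *
      (hA.eigenvectorUnitary : Matrix (Fin d) (Fin d) ℂ) = 1 :=
    (Matrix.mem_unitaryGroup_iff').mp (hA.eigenvectorUnitary).2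
  rw [Matrix.IsHermitian.cfc, Matrix.IsHermitian.cfc, Matrix.IsHermitian.cfc]
  simp only [Unitary.conjStarAlgAut_apply, Unitary.coe_star]
  have : ∀ X Y : Matrix (Fin d) (Fin d) ℂ,
      (hA.eigenvectorUnitary : Matrix (Fin d) (Fin d) ℂ) * X *
        (star (hA.eigenvectorUnitary : Matrix (Fin d) (Fin d) ℂ)) *
      ((hA.eigenvectorUnitary : Matrix (Fin d) (Fin d) ℂ) * Y *
        (star (hA.eigenvectorUnitary : Matrix (Fin d) (Fin d) ℂ)))
      = (hA.eigenvectorUnitary : Matrix (Fin d) (Fin d) ℂ) * (X * Y) *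
        (star (hA.eigenvectorUnitary : Matrix (Fin d) (Fin d) ℂ)) := by
    intro X Y
    calc _ = (hA.eigenvectorUnitary : Matrix (Fin d) (Fin d) ℂ) * (X *
          ((star (hA.eigenvectorUnitary : Matrix (Fin d) (Fin d) ℂ)) *
            (hA.eigenvectorUnitary : Matrix (Fin d) (Fin d) ℂ)) * Y) *
          (star (hA.eigenvectorUnitary : Matrix (Fin d) (Fin d) ℂ)) := by
          simp only [Matrix.mul_assoc]
      _ = _ := by rw [h1, mul_one]
  rw [this, diagonal_mul_diagonal]
  have hfg : (fun i => ((RCLike.ofReal ∘ f ∘ hA.eigenvalues) i : ℂ)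
        * (RCLike.ofReal ∘ g ∘ hA.eigenvalues) i)
      = ((RCLike.ofReal : ℝ → ℂ) ∘ (fun x => f x * g x) ∘ hA.eigenvalues) := by
    funext i; exact (RCLike.ofReal_mul _ _).symm
  rw [hfg]

lemma hcfc_id {A : Matrix (Fin d) (Fin d) ℂ} (hA : A.IsHermitian) :
    hA.cfc (fun x : ℝ => x) = A := by
  conv_rhs => rw [hA.spectral_theorem]
  rfl

lemma hcfc_congr {A : Matrix (Fin d) (Fin d) ℂ} (hA : A.IsHermitian) {f g : ℝ → ℝ}
    (h : ∀ i, f (hA.eigenvalues i) = g (hA.eigenvalues i)) : hA.cfc f = hA.cfc g := by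
  have hfg : ((RCLike.ofReal : ℝ → ℂ) ∘ f ∘ hA.eigenvalues)
      = ((RCLike.ofReal : ℝ → ℂ) ∘ g ∘ hA.eigenvalues) := by
    funext i; simp [Function.comp, h i]
  rw [Matrix.IsHermitian.cfc, Matrix.IsHermitian.cfc, hfg]

lemma cfcRpow_eq {A : Matrix (Fin d) (Fin d) ℂ} (hA : A.IsHermitian) (r : ℝ) :
    A.cfcRpow r = hA.cfc (fun t => t ^ r) :=
  hA.cfc_eq _


lemma trace_hcfc_mul_hcfc {X Y : Matrix (Fin d) (Fin d) ℂ}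
    (hX : X.IsHermitian) (hY : Y.IsHermitian) (f g : ℝ → ℝ) :
    ((hX.cfc f * hY.cfc g).trace).re
      = ∑ a, ∑ b, Complex.normSq ((star (hX.eigenvectorUnitary : Matrix (Fin d) (Fin d) ℂ) *
          (hY.eigenvectorUnitary : Matrix (Fin d) (Fin d) ℂ)) a b)
          * (f (hX.eigenvalues a) * g (hY.eigenvalues b)) := by
  set U : Matrix (Fin d) (Fin d) ℂ := (hX.eigenvectorUnitary : Matrix (Fin d) (Fin d) ℂ) with hU
  set V : Matrix (Fin d) (Fin d) ℂ := (hY.eigenvectorUnitary : Matrix (Fin d) (Fin d) ℂ) with hV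
  have hU1 : U * star U = 1 := (Matrix.mem_unitaryGroup_iff).mp (hX.eigenvectorUnitary).2
  have hU2 : star U * U = 1 := (Matrix.mem_unitaryGroup_iff').mp (hX.eigenvectorUnitary).2
  set D : Matrix (Fin d) (Fin d) ℂ := diagonal (RCLike.ofReal ∘ f ∘ hX.eigenvalues) with hD
  set E : Matrix (Fin d) (Fin d) ℂ := diagonal (RCLike.ofReal ∘ g ∘ hY.eigenvalues) with hE
  set M : Matrix (Fin d) (Fin d) ℂ := star U * V with hM
  have key : hX.cfc f * hY.cfc g = U * ((D * M) * (E * star M)) * star U := by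
    rw [Matrix.IsHermitian.cfc, Matrix.IsHermitian.cfc]
    simp only [Unitary.conjStarAlgAut_apply, Unitary.coe_star]
    rw [← hU, ← hV, ← hD, ← hE, hM]
    simp only [StarMul.star_mul, star_star, Matrix.mul_assoc]
    rw [hU1, mul_one]
  rw [key, Matrix.trace_mul_cycle, ← Matrix.mul_assoc, hU2, one_mul]
  rw [Matrix.trace]
  rw [Complex.re_sum]
  have hentry : ∀ a : Fin d, (((D * M) * (E * star M)).diag a).re
      = ∑ b, Complex.normSq (M a b) * (f (hX.eigenvalues a) * g (hY.eigenvalues b)) := by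
    intro a
    rw [Matrix.diag_apply, Matrix.mul_apply, Complex.re_sum]
    refine Finset.sum_congr rfl fun b _ => ?_
    rw [hD, hE]
    rw [Matrix.diagonal_mul, Matrix.diagonal_mul, Matrix.star_eq_conjTranspose,
      Matrix.conjTranspose_apply]
    have : (RCLike.ofReal ∘ f ∘ hX.eigenvalues) a * M a b *
        ((RCLike.ofReal ∘ g ∘ hY.eigenvalues) b * star (M a b))
        = (((Complex.normSq (M a b) * (f (hX.eigenvalues a) * g (hY.eigenvalues b)) : ℝ)) : ℂ) := by
      simp only [Function.comp_apply, RCLike.ofReal_alg]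
      rw [show ((f (hX.eigenvalues a) : ℝ) • (1:ℂ)) * M a b *
          (((g (hY.eigenvalues b) : ℝ) • (1:ℂ)) * star (M a b))
          = ((f (hX.eigenvalues a) : ℝ) • (1:ℂ)) * (((g (hY.eigenvalues b) : ℝ) • (1:ℂ))) *
            (M a b * star (M a b)) by ring]
      rw [show M a b * star (M a b) = (Complex.normSq (M a b) : ℂ) by
        rw [← Complex.mul_conj]; rfl]
      push_cast
      simp [Complex.real_smul]
      ring
    rw [this, Complex.ofReal_re]
  exact Finset.sum_congr rfl fun a _ => hentry a

lemma weights_row {X Y : Matrix (Fin d) (Fin d) ℂ}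
    (hX : X.IsHermitian) (hY : Y.IsHermitian) (a : Fin d) :
    ∑ b, Complex.normSq ((star (hX.eigenvectorUnitary : Matrix (Fin d) (Fin d) ℂ) *
          (hY.eigenvectorUnitary : Matrix (Fin d) (Fin d) ℂ)) a b) = 1 := by
  set U : Matrix (Fin d) (Fin d) ℂ := (hX.eigenvectorUnitary : Matrix (Fin d) (Fin d) ℂ) with hU
  set V : Matrix (Fin d) (Fin d) ℂ := (hY.eigenvectorUnitary : Matrix (Fin d) (Fin d) ℂ) with hV
  set M : Matrix (Fin d) (Fin d) ℂ := star U * V with hM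
  have hV1 : V * star V = 1 := (Matrix.mem_unitaryGroup_iff).mp (hY.eigenvectorUnitary).2
  have hU2 : star U * U = 1 := (Matrix.mem_unitaryGroup_iff').mp (hX.eigenvectorUnitary).2
  have hMM : M * star M = 1 := by
    have h1 : M * star M = star U * (V * star V) * U := by
      rw [hM]; simp only [StarMul.star_mul, star_star, Matrix.mul_assoc]
    rw [h1, hV1, mul_one, hU2]
  have := congrArg (fun N : Matrix (Fin d) (Fin d) ℂ => (N a a).re) hMM
  simp only [Matrix.mul_apply, Matrix.one_apply_eq, Complex.one_re] at this
  rw [Complex.re_sum] at this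
  rw [← this]
  refine Finset.sum_congr rfl fun b _ => ?_
  rw [Matrix.star_eq_conjTranspose, Matrix.conjTranspose_apply]
  rw [show M a b * star (M a b) = (Complex.normSq (M a b) : ℂ) by
    rw [← Complex.mul_conj]; rfl, Complex.ofReal_re]

lemma weights_col {X Y : Matrix (Fin d) (Fin d) ℂ}
    (hX : X.IsHermitian) (hY : Y.IsHermitian) (b : Fin d) :
    ∑ a, Complex.normSq ((star (hX.eigenvectorUnitary : Matrix (Fin d) (Fin d) ℂ) *
          (hY.eigenvectorUnitary : Matrix (Fin d) (Fin d) ℂ)) a b) = 1 := by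
  set U : Matrix (Fin d) (Fin d) ℂ := (hX.eigenvectorUnitary : Matrix (Fin d) (Fin d) ℂ) with hU
  set V : Matrix (Fin d) (Fin d) ℂ := (hY.eigenvectorUnitary : Matrix (Fin d) (Fin d) ℂ) with hV
  set M : Matrix (Fin d) (Fin d) ℂ := star U * V with hM
  have hU1 : U * star U = 1 := (Matrix.mem_unitaryGroup_iff).mp (hX.eigenvectorUnitary).2
  have hV2 : star V * V = 1 := (Matrix.mem_unitaryGroup_iff').mp (hY.eigenvectorUnitary).2
  have hMM : star M * M = 1 := by
    have h1 : star M * M = star V * (U * star U) * V := by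
      rw [hM]; simp only [StarMul.star_mul, star_star, Matrix.mul_assoc]
    rw [h1, hU1, mul_one, hV2]
  have := congrArg (fun N : Matrix (Fin d) (Fin d) ℂ => (N b b).re) hMM
  simp only [Matrix.mul_apply, Matrix.one_apply_eq, Complex.one_re] at this
  rw [Complex.re_sum] at this
  rw [← this]
  refine Finset.sum_congr rfl fun a _ => ?_
  rw [Matrix.star_eq_conjTranspose, Matrix.conjTranspose_apply]
  rw [show star (M a b) * M a b = (Complex.normSq (M a b) : ℂ) by
    rw [mul_comm, ← Complex.mul_conj]; rfl, Complex.ofReal_re]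


lemma psd_smul {A : Matrix (Fin d) (Fin d) ℂ} (hA : A.PosSemidef) {c : ℝ} (hc : 0 ≤ c) :
    (c • A).PosSemidef := by
  refine ⟨?_, fun x => ?_⟩
  · rw [Matrix.IsHermitian, Matrix.conjTranspose_smul, hA.1]
    norm_num
  · exact (hA.smul hc).2 x

lemma trace_rpow_nonneg {A : Matrix (Fin d) (Fin d) ℂ} (hA : A.PosSemidef) (r : ℝ) :
    0 ≤ ((A.cfcRpow r).trace).re := by
  rw [cfcRpow_eq hA.1, trace_hcfc_re]
  exact Finset.sum_nonneg fun i _ => Real.rpow_nonneg (hA.eigenvalues_nonneg i) r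

lemma trace_mul_rpow_self {p : ℝ} (hp : 1 < p) {A : Matrix (Fin d) (Fin d) ℂ}
    (hA : A.PosSemidef) :
    ((A * A.cfcRpow (p - 1)).trace) = (A.cfcRpow p).trace := by
  rw [cfcRpow_eq hA.1, cfcRpow_eq hA.1]
  rw [show A * hA.1.cfc (fun t : ℝ => t ^ (p - 1))
      = hA.1.cfc (fun x : ℝ => x) * hA.1.cfc (fun t : ℝ => t ^ (p - 1)) by
    rw [hcfc_id hA.1]]
  rw [hcfc_mul_hcfc]
  refine congrArg Matrix.trace (hcfc_congr hA.1 fun i => ?_)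
  have hx : 0 ≤ hA.1.eigenvalues i := hA.eigenvalues_nonneg i
  show hA.1.eigenvalues i * hA.1.eigenvalues i ^ (p - 1) = hA.1.eigenvalues i ^ p
  rcases eq_or_lt_of_le hx with h | h
  · rw [← h, Real.zero_rpow (by intro h'; rw [sub_eq_zero] at h'; exact absurd h'.symm hp.ne),
      Real.zero_rpow (by positivity), mul_zero]
  · have h2 : hA.1.eigenvalues i ^ ((1 : ℝ) + (p - 1))
        = hA.1.eigenvalues i ^ (1 : ℝ) * hA.1.eigenvalues i ^ (p - 1) :=
      Real.rpow_add h 1 (p - 1)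
    rw [Real.rpow_one] at h2
    rw [← h2, show (1 : ℝ) + (p - 1) = p by ring]

lemma young_trace {p : ℝ} (hp : 1 < p) {X Y : Matrix (Fin d) (Fin d) ℂ}
    (hX : X.PosSemidef) (hY : Y.PosSemidef) {t : ℝ} (ht : 0 < t) :
    p * ((X * Y.cfcRpow (p - 1)).trace).re
      ≤ t ^ p * ((X.cfcRpow p).trace).re
        + (p - 1) * t ^ (-(p / (p - 1))) * ((Y.cfcRpow p).trace).re := by
  have hp0 : (0 : ℝ) < p := lt_trans one_pos hp
  have hp1 : (0 : ℝ) < p - 1 := sub_pos.2 hp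
  have hpq : p.HolderConjugate (p / (p - 1)) := by
    simpa [Real.conjExponent] using Real.HolderConjugate.conjExponent hp
  set q : ℝ := p / (p - 1) with hq
  -- rewrite traces
  rw [cfcRpow_eq hY.1, cfcRpow_eq hX.1, cfcRpow_eq hY.1]
  conv_lhs => rw [show X = hX.1.cfc (fun x : ℝ => x) from (hcfc_id hX.1).symm]
  rw [trace_hcfc_mul_hcfc hX.1 hY.1, trace_hcfc_re, trace_hcfc_re]
  set w : Fin d → Fin d → ℝ := fun a b => Complex.normSq
    ((star (hX.1.eigenvectorUnitary : Matrix (Fin d) (Fin d) ℂ) *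
      (hY.1.eigenvectorUnitary : Matrix (Fin d) (Fin d) ℂ)) a b) with hw
  set x : Fin d → ℝ := fun a => hX.1.eigenvalues a with hxdef
  set y : Fin d → ℝ := fun b => hY.1.eigenvalues b with hydef
  have hx0 : ∀ a, 0 ≤ x a := fun a => hX.eigenvalues_nonneg a
  have hy0 : ∀ b, 0 ≤ y b := fun b => hY.eigenvalues_nonneg b
  have hw0 : ∀ a b, 0 ≤ w a b := fun a b => Complex.normSq_nonneg _
  have hrow : ∀ a, ∑ b, w a b = 1 := fun a => weights_row hX.1 hY.1 a
  have hcol : ∀ b, ∑ a, w a b = 1 := fun b => weights_col hX.1 hY.1 b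
  -- pointwise Young inequality
  have hpt : ∀ a b, p * (x a * (y b) ^ (p - 1))
      ≤ t ^ p * (x a) ^ p + (p - 1) * t ^ (-q) * (y b) ^ p := by
    intro a b
    have h1 := Real.young_inequality_of_nonneg
      (mul_nonneg ht.le (hx0 a))
      (mul_nonneg (Real.rpow_nonneg (hy0 b) (p - 1)) (inv_nonneg.2 ht.le)) hpq
    have e1 : t * x a * ((y b) ^ (p - 1) * t⁻¹) = x a * (y b) ^ (p - 1) := by
      field_simp
    have e2 : (t * x a) ^ p = t ^ p * (x a) ^ p :=
      Real.mul_rpow ht.le (hx0 a)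
    have e3 : ((y b) ^ (p - 1) * t⁻¹) ^ q = (y b) ^ p * t ^ (-q) := by
      rw [Real.mul_rpow (Real.rpow_nonneg (hy0 b) (p - 1)) (inv_nonneg.2 ht.le)]
      rw [← Real.rpow_mul (hy0 b), hpq.sub_one_mul_conj]
      rw [Real.inv_rpow ht.le, ← Real.rpow_neg ht.le]
    rw [e1, e2, e3] at h1
    -- h1 : x a * y b ^ (p-1) ≤ t^p * x a ^ p / p + (y b ^ p * t ^ (-q)) / q
    have hq0 : (0 : ℝ) < q := hpq.symm.pos
    have hpq' : p / q = p - 1 := by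
      rw [hq]
      field_simp
    calc p * (x a * (y b) ^ (p - 1))
        ≤ p * (t ^ p * (x a) ^ p / p + (y b) ^ p * t ^ (-q) / q) := by
          exact mul_le_mul_of_nonneg_left h1 hp0.le
      _ = t ^ p * (x a) ^ p + (p / q) * ((y b) ^ p * t ^ (-q)) := by
          field_simp
      _ = t ^ p * (x a) ^ p + (p - 1) * t ^ (-q) * (y b) ^ p := by
          rw [hpq']
          ring
  -- combine
  calc p * ∑ a, ∑ b, w a b * (x a * (y b) ^ (p - 1))
      = ∑ a, ∑ b, w a b * (p * (x a * (y b) ^ (p - 1))) := by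
        rw [Finset.mul_sum]
        refine Finset.sum_congr rfl fun a _ => ?_
        rw [Finset.mul_sum]
        refine Finset.sum_congr rfl fun b _ => ?_
        ring
    _ ≤ ∑ a, ∑ b, w a b * (t ^ p * (x a) ^ p + (p - 1) * t ^ (-q) * (y b) ^ p) := by
        refine Finset.sum_le_sum fun a _ => Finset.sum_le_sum fun b _ => ?_
        exact mul_le_mul_of_nonneg_left (hpt a b) (hw0 a b)
    _ = t ^ p * ∑ a, (x a) ^ p + (p - 1) * t ^ (-q) * ∑ b, (y b) ^ p := by
        have split : ∀ a, ∑ b, w a b * (t ^ p * (x a) ^ p + (p - 1) * t ^ (-q) * (y b) ^ p)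
            = t ^ p * (x a) ^ p + ∑ b, w a b * ((p - 1) * t ^ (-q) * (y b) ^ p) := by
          intro a
          rw [show ∑ b, w a b * (t ^ p * (x a) ^ p + (p - 1) * t ^ (-q) * (y b) ^ p)
              = (∑ b, w a b) * (t ^ p * (x a) ^ p)
                + ∑ b, w a b * ((p - 1) * t ^ (-q) * (y b) ^ p) by
            rw [Finset.sum_mul, ← Finset.sum_add_distrib]
            exact Finset.sum_congr rfl fun b _ => by ring]
          rw [hrow a, one_mul]
        simp only [split]
        rw [Finset.sum_add_distrib, ← Finset.mul_sum]
        congr 1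
        rw [Finset.sum_comm]
        rw [Finset.mul_sum]
        refine Finset.sum_congr rfl fun b _ => ?_
        rw [← Finset.sum_mul, hcol b, one_mul]

end HardyAux

/-- **Non-commutative Hardy inequality under a trace, for sequences of matrices
(Corollary 2.6, matrix case).**
Let `p > 1`, let `d > 0`, and let `(a_n)_{n≥1}` (here indexed by `n : ℕ`, with
`a_n := a (n-1)`) be a sequence of positive semi-definite `d × d` complex matrices such
that `∑_{n=1}^∞ Tr(a_n^p) < ∞`.  Then
`∑_{n=1}^∞ Tr(((1/n) ∑_{k=1}^n a_k)^p) ≤ (p/(p-1))^p ∑_{n=1}^∞ Tr(a_n^p)`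
(the traces being real numbers, compared via their real parts). -/
theorem hardy_trace_matrix_series_inequality
    {d : ℕ} (hd : 0 < d)
    (p : ℝ) (hp : 1 < p)
    (a : ℕ → Matrix (Fin d) (Fin d) ℂ) (ha_pos : ∀ n, (a n).PosSemidef)
    (h_sum : Summable fun n : ℕ => (Matrix.trace ((a n).cfcRpow p)).re) :
    (∑' n : ℕ,
        (Matrix.trace ((((n : ℝ) + 1)⁻¹ • ∑ k ∈ Finset.range (n + 1), a k).cfcRpow p)).re)
      ≤ (p / (p - 1)) ^ p * ∑' n : ℕ, (Matrix.trace ((a n).cfcRpow p)).re := by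
  classical
  have hp0 : (0 : ℝ) < p := lt_trans one_pos hp
  have hp1 : (0 : ℝ) < p - 1 := sub_pos.2 hp
  have hv : (0 : ℝ) < p / (p - 1) := div_pos hp0 hp1
  let S : ℕ → Matrix (Fin d) (Fin d) ℂ := fun n => ∑ k ∈ Finset.range (n + 1), a k
  let A : ℕ → Matrix (Fin d) (Fin d) ℂ := fun n => ((n : ℝ) + 1)⁻¹ • S n
  let φ : ℕ → ℝ := fun n => (Matrix.trace ((A n).cfcRpow p)).re
  let γ : ℕ → ℝ := fun n => (Matrix.trace (a n * (A n).cfcRpow (p - 1))).re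
  let ψ : ℕ → ℝ := fun n => (Matrix.trace ((a n).cfcRpow p)).re
  have hSpsd : ∀ n, (S n).PosSemidef := fun n =>
    Finset.sum_induction a _ (fun _ _ h1 h2 => h1.add h2) Matrix.PosSemidef.zero
      (fun k _ => ha_pos k)
  have hApsd : ∀ n, (A n).PosSemidef := fun n =>
    HardyAux.psd_smul (hSpsd n) (by positivity)
  have hφ0 : ∀ n, 0 ≤ φ n := fun n => HardyAux.trace_rpow_nonneg (hApsd n) p
  have hψ0 : ∀ n, 0 ≤ ψ n := fun n => HardyAux.trace_rpow_nonneg (ha_pos n) p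
  have hSA : ∀ k, S k = ((k : ℝ) + 1) • A k := fun k =>
    (smul_inv_smul₀ (by positivity) _).symm
  -- Step 1 : telescoping bound
  let T : ℕ → ℝ := fun n => (n : ℝ) * φ (n - 1)
  have hstep : ∀ n, (p - 1) * φ n - p * γ n ≤ T n - T (n + 1) := by
    intro n
    cases n with
    | zero =>
      have hA0 : A 0 = a 0 := by
        show ((0 : ℕ) + 1 : ℝ)⁻¹ • (∑ k ∈ Finset.range (0 + 1), a k) = a 0
        simp
      have hγ0 : γ 0 = φ 0 := by
        show (Matrix.trace (a 0 * (A 0).cfcRpow (p - 1))).re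
          = (Matrix.trace ((A 0).cfcRpow p)).re
        rw [hA0, HardyAux.trace_mul_rpow_self hp (ha_pos 0)]
      have hT0 : T 0 = 0 := by
        show ((0 : ℕ) : ℝ) * φ (0 - 1) = 0
        simp
      have hT1 : T 1 = φ 0 := by
        show ((1 : ℕ) : ℝ) * φ (1 - 1) = φ 0
        simp
      show (p - 1) * φ 0 - p * γ 0 ≤ T 0 - T 1
      rw [hT0, hT1, hγ0]
      linarith
    | succ m =>
      have hamn : a (m + 1) = S (m + 1) - S m := by
        have hS : S (m + 1) = S m + a (m + 1) := Finset.sum_range_succ a (m + 1)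
        rw [hS]
        exact (add_sub_cancel_left _ _).symm
      have hφn : (Matrix.trace (A (m + 1) * (A (m + 1)).cfcRpow (p - 1))).re = φ (m + 1) := by
        show _ = (Matrix.trace ((A (m + 1)).cfcRpow p)).re
        rw [HardyAux.trace_mul_rpow_self hp (hApsd (m + 1))]
      have hγeq : γ (m + 1) = ((m : ℝ) + 2) * φ (m + 1)
          - ((m : ℝ) + 1) * (Matrix.trace (A m * (A (m + 1)).cfcRpow (p - 1))).re := by
        have h1 : Matrix.trace (a (m + 1) * (A (m + 1)).cfcRpow (p - 1))
            = (((m : ℕ) + 1 : ℝ) + 1) • Matrix.trace (A (m + 1) * (A (m + 1)).cfcRpow (p - 1))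
              - (((m : ℕ) : ℝ) + 1) • Matrix.trace (A m * (A (m + 1)).cfcRpow (p - 1)) := by
          rw [hamn, Matrix.sub_mul, Matrix.trace_sub]
          rw [hSA (m + 1), hSA m, Matrix.smul_mul, Matrix.smul_mul,
            Matrix.trace_smul, Matrix.trace_smul]
          push_cast
          rw [Matrix.smul_mul, Matrix.trace_smul]
        have h2 := congrArg Complex.re h1
        simp only [Complex.sub_re, Complex.real_smul, Complex.mul_re, Complex.ofReal_re,
          Complex.ofReal_im, zero_mul, sub_zero] at h2
        show (Matrix.trace (a (m + 1) * (A (m + 1)).cfcRpow (p - 1))).re = _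
        rw [h2, hφn]
        push_cast
        ring
      have hyoung := HardyAux.young_trace hp (hApsd m) (hApsd (m + 1)) one_pos
      simp only [Real.one_rpow, one_mul, mul_one] at hyoung
      have h2 := mul_le_mul_of_nonneg_left hyoung (show (0 : ℝ) ≤ (m : ℝ) + 1 by positivity)
      have hTm1 : T (m + 1) = ((m : ℝ) + 1) * φ m := by
        show (((m + 1 : ℕ)) : ℝ) * φ (m + 1 - 1) = _
        push_cast
        rfl
      have hTm2 : T (m + 1 + 1) = ((m : ℝ) + 2) * φ (m + 1) := by
        show (((m + 2 : ℕ)) : ℝ) * φ (m + 2 - 1) = _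
        push_cast
        rfl
      show (p - 1) * φ (m + 1) - p * γ (m + 1) ≤ T (m + 1) - T (m + 1 + 1)
      rw [hTm1, hTm2, hγeq]
      nlinarith [h2]
  have hΦγ : ∀ N, (p - 1) * ∑ n ∈ Finset.range N, φ n ≤ p * ∑ n ∈ Finset.range N, γ n := by
    intro N
    have h1 : ∑ n ∈ Finset.range N, ((p - 1) * φ n - p * γ n) ≤ 0 := by
      calc ∑ n ∈ Finset.range N, ((p - 1) * φ n - p * γ n)
          ≤ ∑ n ∈ Finset.range N, (T n - T (n + 1)) :=
            Finset.sum_le_sum fun n _ => hstep n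
        _ = T 0 - T N := Finset.sum_range_sub' T N
        _ ≤ 0 := by
            have h0 : T 0 = 0 := by show ((0 : ℕ) : ℝ) * φ (0 - 1) = 0; simp
            have hN : 0 ≤ T N := mul_nonneg (Nat.cast_nonneg N) (hφ0 _)
            linarith
    rw [Finset.sum_sub_distrib, ← Finset.mul_sum, ← Finset.mul_sum] at h1
    linarith
  -- Step 3 : scaled Young per term
  have hu : (0 : ℝ) < (p - 1) / p := div_pos hp1 hp0
  set u : ℝ := (p - 1) / p with hu_eq
  set r : ℝ := u ^ (1 - p) with hr_eq
  have ht₀ : (0 : ℝ) < u ^ ((1 - p) / p) := Real.rpow_pos_of_pos hu _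
  have htp : (u ^ ((1 - p) / p)) ^ p = r := by
    rw [← Real.rpow_mul hu.le, div_mul_cancel₀ _ hp0.ne']
  have htq : (u ^ ((1 - p) / p)) ^ (-(p / (p - 1))) = u := by
    rw [← Real.rpow_mul hu.le,
      show (1 - p) / p * -(p / (p - 1)) = 1 by field_simp; ring, Real.rpow_one]
  have hγψ : ∀ n, p * γ n ≤ r * ψ n + (p - 1) * u * φ n := by
    intro n
    have h := HardyAux.young_trace hp (ha_pos n) (hApsd n) ht₀
    rw [htp, htq] at h
    exact h
  have hK : (p / (p - 1)) ^ p = p / (p - 1) * r := by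
    have e : r = (p / (p - 1)) ^ (p - 1) := by
      rw [hr_eq, hu_eq, show (p - 1) / p = (p / (p - 1))⁻¹ by rw [inv_div],
        Real.inv_rpow hv.le, ← Real.rpow_neg hv.le, show -(1 - p) = p - 1 by ring]
    calc (p / (p - 1)) ^ p
        = (p / (p - 1)) ^ ((1 : ℝ) + (p - 1)) := by rw [show (1 : ℝ) + (p - 1) = p by ring]
      _ = (p / (p - 1)) ^ (1 : ℝ) * (p / (p - 1)) ^ (p - 1) := Real.rpow_add hv 1 (p - 1)
      _ = p / (p - 1) * r := by rw [Real.rpow_one, e]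
  have hKpos : (0 : ℝ) ≤ (p / (p - 1)) ^ p := Real.rpow_nonneg hv.le p
  -- Final assembly
  have key : ∀ N, ∑ n ∈ Finset.range N, φ n
      ≤ (p / (p - 1)) ^ p * ∑' n, ψ n := by
    intro N
    have hΨle : ∑ n ∈ Finset.range N, ψ n ≤ ∑' n, ψ n :=
      h_sum.sum_le_tsum _ (fun i _ => hψ0 i)
    have h3 : p * ∑ n ∈ Finset.range N, γ n
        ≤ r * ∑ n ∈ Finset.range N, ψ n + (p - 1) * u * ∑ n ∈ Finset.range N, φ n := by
      calc p * ∑ n ∈ Finset.range N, γ n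
          = ∑ n ∈ Finset.range N, p * γ n := Finset.mul_sum _ _ _
        _ ≤ ∑ n ∈ Finset.range N, (r * ψ n + (p - 1) * u * φ n) :=
            Finset.sum_le_sum fun n _ => hγψ n
        _ = _ := by rw [Finset.sum_add_distrib, ← Finset.mul_sum, ← Finset.mul_sum]
    have h4 : ((p - 1) - (p - 1) * u) * ∑ n ∈ Finset.range N, φ n
        ≤ r * ∑ n ∈ Finset.range N, ψ n := by
      have h5 := (hΦγ N).trans h3
      nlinarith [h5]
    have h6 : ∑ n ∈ Finset.range N, φ n
        ≤ (p / (p - 1)) * (r * ∑ n ∈ Finset.range N, ψ n) := by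
      have h7 := mul_le_mul_of_nonneg_left h4 hv.le
      calc ∑ n ∈ Finset.range N, φ n
          = (p / (p - 1)) * (((p - 1) - (p - 1) * u) * ∑ n ∈ Finset.range N, φ n) := by
            rw [hu_eq]
            field_simp
            ring
        _ ≤ _ := h7
    calc ∑ n ∈ Finset.range N, φ n
        ≤ (p / (p - 1)) * (r * ∑ n ∈ Finset.range N, ψ n) := h6
      _ = (p / (p - 1)) ^ p * ∑ n ∈ Finset.range N, ψ n := by rw [hK]; ring
      _ ≤ (p / (p - 1)) ^ p * ∑' n, ψ n :=
          mul_le_mul_of_nonneg_left hΨle hKpos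
  exact Real.tsum_le_of_sum_range_le (fun n => hφ0 n) key
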